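/- Let $S$ be a finite partially ordered set, let $R$ be a commutative ring, and let $x : S \to R$ be any function. Let $U(S)$ denote the set of nonempty antichains of $S$ (nonempty subsets in which no two elements are comparable), and for $I \subseteq S$ let $C(I)$ denote the set of elements of $S$ that are not less than or equal to any element of $I$. Then $\prod_{T \in S} (1 + x_T) = 1 + \sum_{I \in U(S)} (-1)^{|I|+1} \prod_{T \in I} x_T \prod_{T \in C(I)} (1 + x_T)$. -/

import Mathlib

/-!
Expand both sides into monomials `∏ T ∈ A, x T` over subsets `A ⊆ S`. On the right, a nonempty
antichain `I` together with a subset `B` of `C(I)` produces the monomial of `A = I ∪ B`, and the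
pairs `(I, B)` arising from a given `A` are exactly those with `I` a nonempty set of minimal
elements of `A` and `B = A \ I`. Since a nonempty `A` has a minimal element, the coefficient of
its monomial is `∑ (-1) ^ (#I + 1)` over the nonempty subsets `I` of a nonempty set, which is `1`.
-/

open Finset

theorem filter_not_nonempty_powerset {α : Type*} (M : Finset α) :
    {I ∈ M.powerset | ¬ I.Nonempty} = {∅} := by
  ext I
  simp +contextual [not_nonempty_iff_eq_empty]

theorem sum_powerset_filter_nonempty_neg_one_pow_card_add_one {α R : Type*} [Ring R]
    {M : Finset α} (hM : M.Nonempty) :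
    ∑ I ∈ M.powerset with I.Nonempty, (-1 : R) ^ (#I + 1) = 1 := by
  have hall : ∑ I ∈ M.powerset, (-1 : R) ^ #I = 0 := by
    simpa using congrArg (Int.cast : ℤ → R) (sum_powerset_neg_one_pow_card_of_nonempty hM)
  rw [← sum_filter_add_sum_filter_not _ (·.Nonempty), filter_not_nonempty_powerset, sum_singleton, card_empty,
    pow_zero] at hall
  simp only [pow_succ, mul_neg_one, sum_neg_distrib]
  exact neg_eq_iff_eq_neg.mpr (eq_neg_of_add_eq_zero_left hall)

theorem prod_one_add_eq_one_add_sum_nonempty {ι R : Type*} [CommSemiring R] (x : ι → R)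
    (s : Finset ι) :
    ∏ T ∈ s, (1 + x T) = 1 + ∑ A ∈ s.powerset with A.Nonempty, ∏ T ∈ A, x T := by
  rw [prod_one_add, ← sum_filter_not_add_sum_filter _ (·.Nonempty)]
  rw [filter_not_nonempty_powerset, sum_singleton, prod_empty]

theorem prod_mul_prod_one_add_eq_sum_Icc {ι R : Type*} [CommSemiring R] [DecidableEq ι]
    (x : ι → R) {I C : Finset ι} (h : Disjoint I C) :
    (∏ T ∈ I, x T) * ∏ T ∈ C, (1 + x T) = ∑ A ∈ Icc I (I ∪ C), ∏ T ∈ A, x T := by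
  have hinj : Set.InjOn (I ∪ ·) (C.powerset : Set (Finset ι)) := fun B hB B' hB' hBB' => by
    simp only [coe_powerset, Set.mem_preimage, Set.mem_powerset_iff, coe_subset] at hB hB'
    rw [← union_sdiff_cancel_left (h.mono_right hB), ← union_sdiff_cancel_left (h.mono_right hB')]
    exact congrArg (· \ I) hBB'
  rw [Icc_eq_image_powerset subset_union_left, union_sdiff_cancel_left h, sum_image hinj,
    prod_one_add, mul_sum]
  exact sum_congr rfl fun B hB => (prod_union (h.mono_right (mem_powerset.mp hB))).symm

section OrderedCompl

variable {S : Type*} [Fintype S] [PartialOrder S]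

open scoped Classical in
noncomputable def orderedCompl (I : Finset S) : Finset S :=
  univ.filter fun T : S => ∀ s ∈ I, ¬ T ≤ s

theorem mem_orderedCompl {I : Finset S} {T : S} : T ∈ orderedCompl I ↔ ∀ s ∈ I, ¬ T ≤ s := by
  simp [orderedCompl]

theorem disjoint_orderedCompl (I : Finset S) : Disjoint I (orderedCompl I) :=
  disjoint_left.mpr fun T hT hT' => mem_orderedCompl.mp hT' T hT le_rfl

open scoped Classical in
theorem subset_minimal_iff_isAntichain_and_mem_Icc {I A : Finset S} :
    I ⊆ A.filter (Minimal (· ∈ A)) ↔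
      IsAntichain (· ≤ ·) (I : Set S) ∧ A ∈ Icc I (I ∪ orderedCompl I) := by
  simp only [subset_iff, mem_filter, mem_Icc, mem_union, mem_orderedCompl]
  constructor
  · intro hI
    refine ⟨(setOfPred_minimal_antichain (· ∈ A)).subset fun a ha => (hI ha).2,
      fun a ha => (hI ha).1, fun a ha => or_iff_not_imp_left.mpr fun haI s hs has => ?_⟩
    exact haI ((hI hs).2.eq_of_le ha has ▸ hs)
  · rintro ⟨hanti, hIA, hAC⟩ a ha
    refine ⟨hIA ha, hIA ha, fun b hb hba => ?_⟩
    rcases hAC hb with hbI | hbC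
    · exact (hanti.eq hbI ha hba).ge
    · exact absurd hba (hbC a ha)

end OrderedCompl

open scoped Classical in
/-- Generalized inclusion-exclusion over a finite poset. -/
theorem generalized_inclusion_exclusion {S : Type*} [Fintype S] [PartialOrder S]
    {R : Type*} [CommRing R] (x : S → R) :
    ∏ T : S, (1 + x T) =
      1 + ∑ I ∈ Finset.univ.filter
          (fun I : Finset S => I.Nonempty ∧ IsAntichain (· ≤ ·) (I : Set S)),
        (-1 : R) ^ (I.card + 1) * (∏ T ∈ I, x T) *
          ∏ T ∈ Finset.univ.filter (fun T : S => ∀ s ∈ I, ¬ T ≤ s), (1 + x T) := by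
  have hpairs : ∀ A I : Finset S,
      A ∈ univ.filter (·.Nonempty) ∧
          I ∈ (A.filter (Minimal (· ∈ A))).powerset.filter (·.Nonempty) ↔
        A ∈ Icc I (I ∪ orderedCompl I) ∧
          I ∈ univ.filter (fun I : Finset S => I.Nonempty ∧ IsAntichain (· ≤ ·) (I : Set S)) := by
    intro A I
    simp only [mem_filter, mem_univ, true_and, mem_powerset,
      subset_minimal_iff_isAntichain_and_mem_Icc]
    exact ⟨fun ⟨_, ⟨hanti, hA⟩, hI⟩ => ⟨hA, hI, hanti⟩,
      fun ⟨hA, hI, hanti⟩ => ⟨hI.mono (mem_Icc.mp hA).1, ⟨hanti, hA⟩, hI⟩⟩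
  calc ∏ T : S, (1 + x T)
      = 1 + ∑ A ∈ univ.filter (·.Nonempty), ∏ T ∈ A, x T := by
        rw [prod_one_add_eq_one_add_sum_nonempty, powerset_univ]
    _ = 1 + ∑ A ∈ univ.filter (·.Nonempty),
          ∑ I ∈ (A.filter (Minimal (· ∈ A))).powerset.filter (·.Nonempty),
            (-1 : R) ^ (#I + 1) * ∏ T ∈ A, x T := by
        refine congrArg (1 + ·) (sum_congr rfl fun A hA => ?_)
        obtain ⟨a, ha⟩ := exists_minimal (mem_filter.mp hA).2
        rw [← sum_mul, sum_powerset_filter_nonempty_neg_one_pow_card_add_one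
          ⟨a, mem_filter.mpr ⟨ha.1, ha⟩⟩, one_mul]
    _ = 1 + ∑ I ∈ univ.filter (fun I : Finset S => I.Nonempty ∧ IsAntichain (· ≤ ·) (I : Set S)),
          ∑ A ∈ Icc I (I ∪ orderedCompl I), (-1 : R) ^ (#I + 1) * ∏ T ∈ A, x T := by
        rw [sum_comm' hpairs]
    _ = _ := by
        simp_rw [← mul_sum, ← prod_mul_prod_one_add_eq_sum_Icc x (disjoint_orderedCompl _),
          mul_assoc]
        rfl
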